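/- arXiv:2305.14349 — 5 statements merged into one kernel-verified Lean document; each statement's English description precedes it below -/
import Mathlib

section
/- Every cylinder is a closed interval: for any finite word c = (c₁, …, c_m) of digits in {0,1,2}, the cylinder Λ_c equals the closed interval [val(c₁…c_m(0)), val(c₁…c_m(2))], where (c₁…c_m(0)) denotes the sequence beginning with c₁, …, c_m and continuing with the constant digit 0, and (c₁…c_m(2)) the one continuing with the constant digit 2. -/
open scoped BigOperators

/-- `β j = ∑_{t < j} p t`. -/
noncomputable def salemBeta (p : Fin 3 → ℝ) (j : Fin 3) : ℝ :=
  ∑ t ∈ Finset.univ.filter (fun t => t < j), p t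

/-- The value of a digit sequence `γ : ℕ → {0,1,2}` (indexed from 0):
`val γ = β (γ 0) + ∑_{k ≥ 1} β (γ k) · ∏_{r < k} p (γ r)`. -/
noncomputable def salemVal (p : Fin 3 → ℝ) (γ : ℕ → Fin 3) : ℝ :=
  ∑' k : ℕ, salemBeta p (γ k) * ∏ r ∈ Finset.range k, p (γ r)

/-- The digit operator θ: θ(0)=0, θ(1)=2, θ(2)=1. -/
def theta : Fin 3 → Fin 3 := ![0, 2, 1]

/-- The cylinder with base given by the first `m` values of `c`. -/
def cylinder (p : Fin 3 → ℝ) (m : ℕ) (c : ℕ → Fin 3) : Set ℝ :=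
  { x | ∃ γ : ℕ → Fin 3, (∀ r < m, γ r = c r) ∧ salemVal p γ = x }

/-- The sequence starting with the first `m` digits of `c` and continuing with the
constant digit `j`. -/
def extendW (m : ℕ) (c : ℕ → Fin 3) (j : Fin 3) : ℕ → Fin 3 :=
  fun k => if k < m then c k else j

set_option linter.unusedSectionVars false

namespace SalemAux

open Finset

variable {p : Fin 3 → ℝ}

lemma beta0 (p : Fin 3 → ℝ) : salemBeta p 0 = 0 := by
  rw [salemBeta, show (Finset.univ.filter (fun t => t < (0:Fin 3))) = ∅ by decide]; simp

lemma beta1 (p : Fin 3 → ℝ) : salemBeta p 1 = p 0 := by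
  rw [salemBeta, show (Finset.univ.filter (fun t => t < (1:Fin 3))) = {0} by decide]; simp

lemma beta2 (p : Fin 3 → ℝ) : salemBeta p 2 = p 0 + p 1 := by
  rw [salemBeta, show (Finset.univ.filter (fun t => t < (2:Fin 3))) = {0,1} by decide]; simp

section hyp
variable (hp : ∀ i, 0 < p i ∧ p i < 1) (hsum : p 0 + p 1 + p 2 = 1)

include hp in
lemma beta_nonneg (j : Fin 3) : 0 ≤ salemBeta p j := by
  fin_cases j <;>
    simp only [show (⟨0, by omega⟩ : Fin 3) = 0 from rfl, show (⟨1, by omega⟩ : Fin 3) = 1 from rfl,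
      show (⟨2, by omega⟩ : Fin 3) = 2 from rfl, beta0, beta1, beta2] <;>
    nlinarith [(hp 0).1, (hp 1).1]

include hp hsum in
lemma beta_add_le (j : Fin 3) : salemBeta p j + p j ≤ 1 := by
  fin_cases j <;>
    simp only [show (⟨0, by omega⟩ : Fin 3) = 0 from rfl, show (⟨1, by omega⟩ : Fin 3) = 1 from rfl,
      show (⟨2, by omega⟩ : Fin 3) = 2 from rfl, beta0, beta1, beta2] <;>
    nlinarith [(hp 0).1, (hp 1).1, (hp 2).1]

/-- a bound `q < 1` for all the `p i` -/
noncomputable def qq (p : Fin 3 → ℝ) : ℝ := max (p 0) (max (p 1) (p 2))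

include hp in
lemma qq_lt_one : qq p < 1 := by
  have := (hp 0).2; have := (hp 1).2; have := (hp 2).2
  simp only [qq, max_lt_iff]; exact ⟨‹_›, ‹_›, ‹_›⟩

include hp in
lemma qq_nonneg : 0 ≤ qq p := le_trans (hp 0).1.le (le_max_left _ _)

include hp in
lemma le_qq (j : Fin 3) : p j ≤ qq p := by
  fin_cases j
  · exact le_max_left _ _
  · exact le_trans (le_max_left _ _) (le_max_right _ _)
  · exact le_trans (le_max_right _ _) (le_max_right _ _)

include hp in
lemma prod_nonneg' (γ : ℕ → Fin 3) (n : ℕ) : 0 ≤ ∏ r ∈ range n, p (γ r) :=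
  Finset.prod_nonneg fun r _ => (hp (γ r)).1.le

include hp in
lemma prod_pos' (γ : ℕ → Fin 3) (n : ℕ) : 0 < ∏ r ∈ range n, p (γ r) :=
  Finset.prod_pos fun r _ => (hp (γ r)).1

include hp in
lemma prod_le_qq (γ : ℕ → Fin 3) (n : ℕ) : ∏ r ∈ range n, p (γ r) ≤ (qq p) ^ n := by
  calc ∏ r ∈ range n, p (γ r) ≤ ∏ _r ∈ range n, qq p :=
        Finset.prod_le_prod (fun r _ => (hp (γ r)).1.le) (fun r _ => le_qq hp _)
    _ = (qq p) ^ n := by rw [Finset.prod_const, card_range]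

include hp hsum in
lemma term_nonneg (γ : ℕ → Fin 3) (k : ℕ) :
    0 ≤ salemBeta p (γ k) * ∏ r ∈ range k, p (γ r) :=
  mul_nonneg (beta_nonneg hp _) (prod_nonneg' hp γ k)

include hp hsum in
lemma summable_val (γ : ℕ → Fin 3) :
    Summable (fun k => salemBeta p (γ k) * ∏ r ∈ range k, p (γ r)) := by
  have hle : ∀ k, salemBeta p (γ k) * ∏ r ∈ range k, p (γ r) ≤ (qq p) ^ k := by
    intro k
    have hβ : salemBeta p (γ k) ≤ 1 := by
      have := beta_add_le hp hsum (γ k); have := (hp (γ k)).1; linarith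
    calc salemBeta p (γ k) * ∏ r ∈ range k, p (γ r) ≤ 1 * (qq p) ^ k :=
          mul_le_mul hβ (prod_le_qq hp γ k) (prod_nonneg' hp γ k) zero_le_one
      _ = (qq p) ^ k := one_mul _
  exact Summable.of_nonneg_of_le (term_nonneg hp hsum γ) hle
    (summable_geometric_of_lt_one (qq_nonneg hp) (qq_lt_one hp))

include hp hsum in
lemma val_nonneg (γ : ℕ → Fin 3) : 0 ≤ salemVal p γ :=
  tsum_nonneg (term_nonneg hp hsum γ)

include hp hsum in
lemma val_le_one (γ : ℕ → Fin 3) : salemVal p γ ≤ 1 := by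
  apply Summable.tsum_le_of_sum_range_le (summable_val hp hsum γ)
  intro n
  have h1 : ∑ k ∈ range n, salemBeta p (γ k) * ∏ r ∈ range k, p (γ r)
      ≤ ∑ k ∈ range n, ((∏ r ∈ range k, p (γ r)) - ∏ r ∈ range (k+1), p (γ r)) := by
    apply Finset.sum_le_sum
    intro k _
    rw [Finset.prod_range_succ]
    have hβ := beta_add_le hp hsum (γ k)
    have hnn := prod_nonneg' hp γ k
    nlinarith
  have h2 : ∑ k ∈ range n, ((∏ r ∈ range k, p (γ r)) - ∏ r ∈ range (k+1), p (γ r))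
      = 1 - ∏ r ∈ range n, p (γ r) := by
    rw [Finset.sum_range_sub' (fun k => ∏ r ∈ range k, p (γ r)) n]; simp
  have := prod_nonneg' hp γ n
  linarith

include hp hsum in
lemma val_step (γ : ℕ → Fin 3) :
    salemVal p γ = salemBeta p (γ 0) + p (γ 0) * salemVal p (fun n => γ (n + 1)) := by
  rw [salemVal, Summable.tsum_eq_zero_add (summable_val hp hsum γ)]
  simp only [range_zero, prod_empty, mul_one]
  congr 1
  rw [salemVal, ← tsum_mul_left]
  apply tsum_congr
  intro k
  rw [Finset.prod_range_succ']
  ring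

include hp hsum in
lemma val_shift (γ : ℕ → Fin 3) (n : ℕ) :
    salemVal p γ = (∑ k ∈ range n, salemBeta p (γ k) * ∏ r ∈ range k, p (γ r))
      + (∏ r ∈ range n, p (γ r)) * salemVal p (fun k => γ (k + n)) := by
  induction n with
  | zero => simp
  | succ n ih =>
    have h := val_step hp hsum (fun k => γ (k + n))
    simp only [Nat.zero_add] at h
    have he : (fun m => γ (m + 1 + n)) = fun m => γ (m + (n + 1)) := by
      funext m; congr 1; omega
    rw [he] at h
    rw [ih, h, Finset.sum_range_succ, Finset.prod_range_succ]
    ring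

include hp hsum in
lemma val_const (j : Fin 3) : salemVal p (fun _ => j) = salemBeta p j * (1 - p j)⁻¹ := by
  rw [salemVal]
  have h : ∀ k : ℕ, salemBeta p ((fun _ => j) k) * ∏ r ∈ range k, p ((fun _ => j) r)
      = salemBeta p j * (p j) ^ k := by
    intro k; simp [Finset.prod_const]
  rw [tsum_congr h, tsum_mul_left, tsum_geometric_of_lt_one (hp j).1.le (hp j).2]

include hp hsum in
lemma val_const0 : salemVal p (fun _ => (0 : Fin 3)) = 0 := by
  rw [val_const hp hsum, beta0]; ring

include hp hsum in
lemma val_const2 : salemVal p (fun _ => (2 : Fin 3)) = 1 := by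
  rw [val_const hp hsum, beta2]
  have h2 : 1 - p 2 = p 0 + p 1 := by linarith
  rw [← h2]
  have : 1 - p 2 ≠ 0 := by have := (hp 2).2; linarith
  field_simp

lemma extendW_lt {m k : ℕ} (c : ℕ → Fin 3) (j : Fin 3) (hk : k < m) :
    extendW m c j k = c k := if_pos hk

lemma extendW_ge {m k : ℕ} (c : ℕ → Fin 3) (j : Fin 3) (hk : ¬ k < m) :
    extendW m c j k = j := if_neg hk

include hp hsum in
lemma val_extend (m : ℕ) (c : ℕ → Fin 3) (j : Fin 3) :
    salemVal p (extendW m c j)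
      = (∑ k ∈ range m, salemBeta p (c k) * ∏ r ∈ range k, p (c r))
        + (∏ r ∈ range m, p (c r)) * salemVal p (fun _ => j) := by
  rw [val_shift hp hsum (extendW m c j) m]
  congr 1
  · apply Finset.sum_congr rfl
    intro k hk
    rw [extendW_lt c j (mem_range.mp hk)]
    congr 1
    apply Finset.prod_congr rfl
    intro r hr
    rw [extendW_lt c j (lt_trans (mem_range.mp hr) (mem_range.mp hk))]
  · congr 1
    · apply Finset.prod_congr rfl
      intro r hr
      rw [extendW_lt c j (mem_range.mp hr)]
    · congr 1
      funext k
      rw [extendW_ge c j (by omega)]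

include hp hsum in
lemma val_agree (m : ℕ) (c γ : ℕ → Fin 3) (hag : ∀ r < m, γ r = c r) :
    salemVal p γ = (∑ k ∈ range m, salemBeta p (c k) * ∏ r ∈ range k, p (c r))
      + (∏ r ∈ range m, p (c r)) * salemVal p (fun k => γ (k + m)) := by
  rw [val_shift hp hsum γ m]
  congr 1
  · apply Finset.sum_congr rfl
    intro k hk
    rw [hag k (mem_range.mp hk)]
    congr 1
    apply Finset.prod_congr rfl
    intro r hr
    rw [hag r (lt_trans (mem_range.mp hr) (mem_range.mp hk))]
  · congr 1
    apply Finset.prod_congr rfl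
    intro r hr
    rw [hag r (mem_range.mp hr)]

/-! ### Surjectivity onto `[0,1]` -/

noncomputable def digit (p : Fin 3 → ℝ) (x : ℝ) : Fin 3 :=
  if x < p 0 then 0 else if x < p 0 + p 1 then 1 else 2

noncomputable def tmap (p : Fin 3 → ℝ) (x : ℝ) : ℝ :=
  (x - salemBeta p (digit p x)) / p (digit p x)

include hp hsum in
lemma step (x : ℝ) (hx : x ∈ Set.Icc (0:ℝ) 1) :
    x = salemBeta p (digit p x) + p (digit p x) * tmap p x ∧
      tmap p x ∈ Set.Icc (0:ℝ) 1 := by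
  rw [Set.mem_Icc] at hx ⊢
  obtain ⟨hx0, hx1⟩ := hx
  have h0 := (hp 0).1; have h1 := (hp 1).1; have h2 := (hp 2).1
  unfold tmap digit
  split_ifs with ha hb
  · rw [beta0]
    refine ⟨by field_simp; ring, div_nonneg (by linarith) h0.le, ?_⟩
    rw [div_le_one h0]; linarith
  · rw [beta1]
    refine ⟨by field_simp; ring, div_nonneg (by linarith) h1.le, ?_⟩
    rw [div_le_one h1]; linarith
  · rw [beta2]
    refine ⟨by field_simp; ring, div_nonneg (by linarith) h2.le, ?_⟩
    rw [div_le_one h2]; linarith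

noncomputable def orb (p : Fin 3 → ℝ) (x : ℝ) : ℕ → ℝ := fun n => (tmap p)^[n] x

include hp hsum in
lemma orb_mem (x : ℝ) (hx : x ∈ Set.Icc (0:ℝ) 1) (n : ℕ) : orb p x n ∈ Set.Icc (0:ℝ) 1 := by
  induction n with
  | zero => exact hx
  | succ n ih =>
    have h := (step hp hsum _ ih).2
    rw [orb, Function.iterate_succ_apply']
    exact h

include hp hsum in
lemma orb_expand (x : ℝ) (hx : x ∈ Set.Icc (0:ℝ) 1) (n : ℕ) :
    x = (∑ k ∈ range n,
          salemBeta p (digit p (orb p x k)) * ∏ r ∈ range k, p (digit p (orb p x r)))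
        + (∏ r ∈ range n, p (digit p (orb p x r))) * orb p x n := by
  induction n with
  | zero => simp [orb]
  | succ n ih =>
    have hs := (step hp hsum (orb p x n) (orb_mem hp hsum x hx n)).1
    have ho : orb p x (n + 1) = tmap p (orb p x n) := by
      rw [orb, orb, Function.iterate_succ_apply']
    rw [Finset.sum_range_succ, Finset.prod_range_succ, ho]
    linear_combination ih + (∏ r ∈ range n, p (digit p (orb p x r))) * hs

include hp hsum in
lemma exists_val (x : ℝ) (hx : x ∈ Set.Icc (0:ℝ) 1) : ∃ γ : ℕ → Fin 3, salemVal p γ = x := by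
  refine ⟨fun n => digit p (orb p x n), ?_⟩
  set γ : ℕ → Fin 3 := fun n => digit p (orb p x n) with hγ
  have hγd : ∀ k, digit p (orb p x k) = γ k := fun k => rfl
  have key : ∀ n, |salemVal p γ - x| ≤ (qq p) ^ n := by
    intro n
    have h1 := orb_expand hp hsum x hx n
    simp only [hγd] at h1
    have h2 := val_shift hp hsum γ n
    have hA := prod_le_qq hp γ n
    have hAnn := prod_nonneg' hp γ n
    have ht1 := val_nonneg hp hsum (fun k => γ (k + n))
    have ht2 := val_le_one hp hsum (fun k => γ (k + n))
    have ho := orb_mem hp hsum x hx n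
    rw [Set.mem_Icc] at ho
    have hd : salemVal p γ - x
        = (∏ r ∈ range n, p (γ r)) * (salemVal p (fun k => γ (k + n)) - orb p x n) := by
      rw [h2]; linear_combination -h1
    rw [hd, abs_mul, abs_of_nonneg hAnn]
    have habs : |salemVal p (fun k => γ (k + n)) - orb p x n| ≤ 1 := by
      rw [abs_le]; constructor <;> linarith
    calc (∏ r ∈ range n, p (γ r)) * |salemVal p (fun k => γ (k + n)) - orb p x n|
        ≤ (∏ r ∈ range n, p (γ r)) * 1 := by
          exact mul_le_mul_of_nonneg_left habs hAnn
      _ = ∏ r ∈ range n, p (γ r) := mul_one _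
      _ ≤ (qq p) ^ n := hA
  have hlim : Filter.Tendsto (fun n => (qq p) ^ n) Filter.atTop (nhds 0) :=
    tendsto_pow_atTop_nhds_zero_of_lt_one (qq_nonneg hp) (qq_lt_one hp)
  have hle : |salemVal p γ - x| ≤ 0 := ge_of_tendsto' hlim key
  have := abs_nonneg (salemVal p γ - x)
  have h0 : salemVal p γ - x = 0 := abs_eq_zero.mp (le_antisymm hle this)
  linarith

end hyp
end SalemAux


/-- Every cylinder is the closed interval from `val (c₁…c_m (0))` to `val (c₁…c_m (2))`. -/
theorem cylinder_eq_Icc (p : Fin 3 → ℝ) (hp : ∀ i, 0 < p i ∧ p i < 1)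
    (hsum : p 0 + p 1 + p 2 = 1) (m : ℕ) (c : ℕ → Fin 3) :
    cylinder p m c =
      Set.Icc (salemVal p (extendW m c 0)) (salemVal p (extendW m c 2)) := by
  set S := ∑ k ∈ Finset.range m, salemBeta p (c k) * ∏ r ∈ Finset.range k, p (c r) with hS
  set A := ∏ r ∈ Finset.range m, p (c r) with hA
  have hApos : 0 < A := SalemAux.prod_pos' hp c m
  have hE0 : salemVal p (extendW m c 0) = S := by
    rw [SalemAux.val_extend hp hsum, SalemAux.val_const0 hp hsum, hS]; ring
  have hE2 : salemVal p (extendW m c 2) = S + A := by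
    rw [SalemAux.val_extend hp hsum, SalemAux.val_const2 hp hsum, hS, hA]; ring
  ext x
  simp only [cylinder, Set.mem_setOf_eq, Set.mem_Icc, hE0, hE2]
  constructor
  · rintro ⟨γ, hag, rfl⟩
    have h := SalemAux.val_agree hp hsum m c γ hag
    rw [← hS, ← hA] at h
    have h1 := SalemAux.val_nonneg hp hsum (fun k => γ (k + m))
    have h2 := SalemAux.val_le_one hp hsum (fun k => γ (k + m))
    constructor <;> nlinarith
  · rintro ⟨hx1, hx2⟩
    have hv : (x - S) / A ∈ Set.Icc (0:ℝ) 1 := by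
      rw [Set.mem_Icc]
      refine ⟨div_nonneg (by linarith) hApos.le, ?_⟩
      rw [div_le_one hApos]; linarith
    obtain ⟨δ, hδ⟩ := SalemAux.exists_val hp hsum _ hv
    refine ⟨fun k => if k < m then c k else δ (k - m), fun r hr => if_pos hr, ?_⟩
    have hag : ∀ r < m, (fun k => if k < m then c k else δ (k - m)) r = c r :=
      fun r hr => if_pos hr
    have h := SalemAux.val_agree hp hsum m c _ hag
    have htail : (fun k => (fun k => if k < m then c k else δ (k - m)) (k + m)) = δ := by
      funext k
      simp only
      rw [if_neg (by omega)]
      congr 1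
      omega
    rw [htail] at h
    rw [h, ← hS, ← hA, hδ]
    field_simp
    ring
end

section
/- The Lebesgue measure (length) of a cylinder is the product of the probabilities of its base digits: for any finite word c = (c₁, …, c_m) of digits in {0,1,2}, the Lebesgue measure of Λ_c equals ∏_{r=1}^{m} p_{c_r}. Equivalently, val(c₁…c_m(2)) − val(c₁…c_m(0)) = ∏_{r=1}^{m} p_{c_r}. -/
open scoped BigOperators

/-! ### Auxiliary lemmas -/

set_option linter.unusedSectionVars false
section SalemAux
variable (p : Fin 3 → ℝ)

lemma beta_zero : salemBeta p 0 = 0 := by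
  have h : (Finset.univ.filter (fun t : Fin 3 => t < (0:Fin 3))) = ∅ := by decide
  rw [salemBeta, h, Finset.sum_empty]

lemma beta_one : salemBeta p 1 = p 0 := by
  have h : (Finset.univ.filter (fun t : Fin 3 => t < (1:Fin 3))) = {0} := by decide
  rw [salemBeta, h, Finset.sum_singleton]

lemma beta_two : salemBeta p 2 = p 0 + p 1 := by
  have h : (Finset.univ.filter (fun t : Fin 3 => t < (2:Fin 3))) = {0, 1} := by decide
  rw [salemBeta, h, Finset.sum_pair (by decide)]

/-- maximal probability -/
noncomputable def salemQ : ℝ := max (max (p 0) (p 1)) (p 2)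

/-- The greedy digit of `x`. -/
noncomputable def salemDigit (x : ℝ) : Fin 3 :=
  if x ≤ p 0 then 0 else if x ≤ p 0 + p 1 then 1 else 2

/-- The orbit of `x` under the expanding map. -/
noncomputable def salemOrbit (x : ℝ) : ℕ → ℝ
  | 0 => x
  | n + 1 =>
      let y := salemOrbit x n
      (y - salemBeta p (salemDigit p y)) / p (salemDigit p y)

variable (hp : ∀ i, 0 < p i ∧ p i < 1) (hsum : p 0 + p 1 + p 2 = 1)
include hp

lemma beta_nonneg (j : Fin 3) : 0 ≤ salemBeta p j :=
  Finset.sum_nonneg fun i _ => (hp i).1.le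

include hsum in
lemma beta_add_le (j : Fin 3) : salemBeta p j + p j ≤ 1 := by
  have hins : insert j (Finset.univ.filter (fun t : Fin 3 => t < j)) =
      Finset.univ.filter (fun t : Fin 3 => t ≤ j) := by
    ext t
    simp [Finset.mem_insert, le_iff_lt_or_eq, or_comm, eq_comm]
  have : salemBeta p j + p j = ∑ t ∈ Finset.univ.filter (fun t : Fin 3 => t ≤ j), p t := by
    rw [← hins, Finset.sum_insert (by simp), salemBeta, add_comm]
  rw [this]
  calc ∑ t ∈ Finset.univ.filter (fun t : Fin 3 => t ≤ j), p t
      ≤ ∑ t : Fin 3, p t :=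
        Finset.sum_le_sum_of_subset_of_nonneg (Finset.filter_subset _ _)
          (fun i _ _ => (hp i).1.le)
    _ = 1 := by rw [Fin.sum_univ_three]; exact hsum

include hsum in
lemma beta_le (j : Fin 3) : salemBeta p j ≤ 1 - p j := by
  linarith [beta_add_le p hp hsum j]

lemma p_le_q (i : Fin 3) : p i ≤ salemQ p := by
  fin_cases i
  · exact le_trans (le_max_left _ _) (le_max_left _ _)
  · exact le_trans (le_max_right _ _) (le_max_left _ _)
  · exact le_max_right _ _

lemma q_pos : 0 < salemQ p := lt_of_lt_of_le (hp 0).1 (p_le_q p hp 0)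

lemma q_lt_one : salemQ p < 1 := by
  simp only [salemQ, max_lt_iff]
  exact ⟨⟨(hp 0).2, (hp 1).2⟩, (hp 2).2⟩

lemma prod_le_q_pow (γ : ℕ → Fin 3) (k : ℕ) :
    ∏ r ∈ Finset.range k, p (γ r) ≤ salemQ p ^ k := by
  calc ∏ r ∈ Finset.range k, p (γ r) ≤ ∏ _r ∈ Finset.range k, salemQ p :=
        Finset.prod_le_prod (fun i _ => (hp (γ i)).1.le) (fun i _ => p_le_q p hp (γ i))
    _ = salemQ p ^ k := by rw [Finset.prod_const, Finset.card_range]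

lemma prod_nonneg' (γ : ℕ → Fin 3) (k : ℕ) : 0 ≤ ∏ r ∈ Finset.range k, p (γ r) :=
  Finset.prod_nonneg fun i _ => (hp (γ i)).1.le

lemma term_nonneg (γ : ℕ → Fin 3) (k : ℕ) :
    0 ≤ salemBeta p (γ k) * ∏ r ∈ Finset.range k, p (γ r) :=
  mul_nonneg (beta_nonneg p hp _) (prod_nonneg' p hp γ k)

include hsum in
lemma term_le (γ : ℕ → Fin 3) (k : ℕ) :
    salemBeta p (γ k) * ∏ r ∈ Finset.range k, p (γ r) ≤ salemQ p ^ k := by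
  have h1 : salemBeta p (γ k) ≤ 1 := by
    have := beta_le p hp hsum (γ k); linarith [(hp (γ k)).1]
  calc salemBeta p (γ k) * ∏ r ∈ Finset.range k, p (γ r)
      ≤ 1 * (salemQ p ^ k) :=
        mul_le_mul h1 (prod_le_q_pow p hp γ k) (prod_nonneg' p hp γ k) one_pos.le
    _ = salemQ p ^ k := one_mul _

include hsum in
lemma summable_term (γ : ℕ → Fin 3) :
    Summable (fun k => salemBeta p (γ k) * ∏ r ∈ Finset.range k, p (γ r)) :=
  Summable.of_nonneg_of_le (term_nonneg p hp γ) (term_le p hp hsum γ)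
    (summable_geometric_of_lt_one (q_pos p hp).le (q_lt_one p hp))

include hsum in
lemma val_shift (γ : ℕ → Fin 3) (m : ℕ) :
    salemVal p γ = (∑ k ∈ Finset.range m, salemBeta p (γ k) * ∏ r ∈ Finset.range k, p (γ r))
      + (∏ r ∈ Finset.range m, p (γ r)) * salemVal p (fun k => γ (k + m)) := by
  have hsummable := summable_term p hp hsum γ
  have h := Summable.sum_add_tsum_nat_add m hsummable
  rw [salemVal, ← h]
  congr 1
  have hpt : ∀ i : ℕ, salemBeta p (γ (i + m)) * ∏ r ∈ Finset.range (i + m), p (γ r)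
      = (∏ r ∈ Finset.range m, p (γ r)) *
        (salemBeta p (γ (i + m)) * ∏ r ∈ Finset.range i, p (γ (r + m))) := by
    intro i
    rw [add_comm i m, Finset.prod_range_add]
    have hpr : (∏ x ∈ Finset.range i, p (γ (m + x))) = ∏ r ∈ Finset.range i, p (γ (r + m)) :=
      Finset.prod_congr rfl fun r _ => by rw [add_comm]
    rw [hpr, add_comm m i]
    ring
  calc (∑' i, salemBeta p (γ (i + m)) * ∏ r ∈ Finset.range (i + m), p (γ r))
      = ∑' i, (∏ r ∈ Finset.range m, p (γ r)) *
          (salemBeta p (γ (i + m)) * ∏ r ∈ Finset.range i, p (γ (r + m))) := by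
        exact tsum_congr hpt
    _ = (∏ r ∈ Finset.range m, p (γ r)) * salemVal p (fun k => γ (k + m)) := by
        rw [tsum_mul_left]; rfl

lemma val_nonneg (γ : ℕ → Fin 3) : 0 ≤ salemVal p γ :=
  tsum_nonneg (term_nonneg p hp γ)

include hsum in
lemma prod_tendsto_zero (γ : ℕ → Fin 3) :
    Filter.Tendsto (fun n => ∏ r ∈ Finset.range n, p (γ r)) Filter.atTop (nhds 0) := by
  have hgeo : Filter.Tendsto (fun n : ℕ => salemQ p ^ n) Filter.atTop (nhds 0) :=
    tendsto_pow_atTop_nhds_zero_of_lt_one (q_pos p hp).le (q_lt_one p hp)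
  exact squeeze_zero (fun n => prod_nonneg' p hp γ n) (fun n => prod_le_q_pow p hp γ n) hgeo

include hsum in
lemma val_le_one (γ : ℕ → Fin 3) : salemVal p γ ≤ 1 := by
  set f : ℕ → ℝ := fun n => ∏ r ∈ Finset.range n, p (γ r) with hf
  have hsumg : HasSum (fun k => f k - f (k + 1)) 1 := by
    have hps : ∀ n, ∑ k ∈ Finset.range n, (f k - f (k + 1)) = f 0 - f n :=
      fun n => Finset.sum_range_sub' f n
    have hb : ∀ k : ℕ, ‖f k - f (k + 1)‖ ≤ salemQ p ^ k := by
      intro k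
      rw [Real.norm_eq_abs, abs_of_nonneg]
      · have h1 : f (k+1) = f k * p (γ k) := Finset.prod_range_succ _ _
        have h2 := prod_le_q_pow p hp γ k
        nlinarith [prod_nonneg' p hp γ k, (hp (γ k)).1, (hp (γ k)).2]
      · have h1 : f (k+1) = f k * p (γ k) := Finset.prod_range_succ _ _
        nlinarith [prod_nonneg' p hp γ k, (hp (γ k)).1, (hp (γ k)).2]
    have hs : Summable fun k => ‖f k - f (k + 1)‖ :=
      Summable.of_nonneg_of_le (fun k => norm_nonneg _) hb
        (summable_geometric_of_lt_one (q_pos p hp).le (q_lt_one p hp))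
    rw [hasSum_iff_tendsto_nat_of_summable_norm hs]
    simp only [hps]
    have h0 : f 0 = 1 := by simp [hf]
    rw [h0]
    have := (prod_tendsto_zero p hp hsum γ)
    simpa using (tendsto_const_nhds.sub this : Filter.Tendsto (fun n => 1 - f n) _ _)
  have hle : ∀ k, salemBeta p (γ k) * f k ≤ f k - f (k + 1) := by
    intro k
    have h1 : f (k+1) = f k * p (γ k) := Finset.prod_range_succ _ _
    have h2 := beta_le p hp hsum (γ k)
    have h3 := prod_nonneg' p hp γ k
    nlinarith
  calc salemVal p γ ≤ ∑' k, (f k - f (k + 1)) :=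
        Summable.tsum_le_tsum hle (summable_term p hp hsum γ) hsumg.summable
    _ = 1 := hsumg.tsum_eq

omit hp in
lemma val_const_zero : salemVal p (fun _ => (0 : Fin 3)) = 0 := by
  simp [salemVal, beta_zero]

include hsum in
lemma val_const_two : salemVal p (fun _ => (2 : Fin 3)) = 1 := by
  have h2 : p 2 < 1 := (hp 2).2
  have h2' : 0 ≤ p 2 := (hp 2).1.le
  have h : salemVal p (fun _ => (2 : Fin 3)) = ∑' k : ℕ, (p 0 + p 1) * p 2 ^ k := by
    apply tsum_congr; intro k
    rw [beta_two, Finset.prod_const, Finset.card_range]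
  rw [h, tsum_mul_left, tsum_geometric_of_lt_one h2' h2]
  have h3 : p 0 + p 1 = 1 - p 2 := by linarith
  rw [h3, mul_inv_cancel₀ (by linarith : (1:ℝ) - p 2 ≠ 0)]

include hsum in
lemma digit_mem {x : ℝ} (hx : x ∈ Set.Icc (0:ℝ) 1) :
    salemBeta p (salemDigit p x) ≤ x ∧ x ≤ salemBeta p (salemDigit p x) + p (salemDigit p x) := by
  obtain ⟨hx0, hx1⟩ := hx
  unfold salemDigit
  split_ifs with h1 h2
  · rw [beta_zero]; exact ⟨hx0, by linarith⟩
  · rw [beta_one]; constructor <;> push_neg at h1 <;> linarith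
  · rw [beta_two]; push_neg at h1 h2; constructor <;> linarith

include hsum in
lemma orbit_mem {x : ℝ} (hx : x ∈ Set.Icc (0:ℝ) 1) (n : ℕ) :
    salemOrbit p x n ∈ Set.Icc (0:ℝ) 1 := by
  induction n with
  | zero => exact hx
  | succ n ih =>
      have hd := digit_mem p hp hsum ih
      set y := salemOrbit p x n
      set d := salemDigit p y
      have hpd := (hp d).1
      have horb : salemOrbit p x (n+1) = (y - salemBeta p d) / p d := rfl
      rw [horb]
      constructor
      · exact div_nonneg (by linarith [hd.1]) hpd.le
      · rw [div_le_one hpd]; linarith [hd.2]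

lemma orbit_key {x : ℝ} (n : ℕ) :
    x = (∑ k ∈ Finset.range n,
          salemBeta p (salemDigit p (salemOrbit p x k)) *
            ∏ r ∈ Finset.range k, p (salemDigit p (salemOrbit p x r)))
        + (∏ r ∈ Finset.range n, p (salemDigit p (salemOrbit p x r))) * salemOrbit p x n := by
  induction n with
  | zero => simp [salemOrbit]
  | succ n ih =>
      rw [Finset.sum_range_succ, Finset.prod_range_succ]
      have horb : salemOrbit p x (n+1) =
          (salemOrbit p x n - salemBeta p (salemDigit p (salemOrbit p x n))) /
            p (salemDigit p (salemOrbit p x n)) := rfl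
      have hpd := (hp (salemDigit p (salemOrbit p x n))).1
      rw [horb]
      have key : (∏ r ∈ Finset.range n, p (salemDigit p (salemOrbit p x r))) *
            p (salemDigit p (salemOrbit p x n)) *
            ((salemOrbit p x n - salemBeta p (salemDigit p (salemOrbit p x n))) /
              p (salemDigit p (salemOrbit p x n)))
          = (∏ r ∈ Finset.range n, p (salemDigit p (salemOrbit p x r))) * salemOrbit p x n
            - salemBeta p (salemDigit p (salemOrbit p x n)) *
                ∏ r ∈ Finset.range n, p (salemDigit p (salemOrbit p x r)) := by
        field_simp
      rw [key]
      linarith [ih]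

include hsum in
lemma val_surj {x : ℝ} (hx : x ∈ Set.Icc (0:ℝ) 1) :
    ∃ γ : ℕ → Fin 3, salemVal p γ = x := by
  set γ : ℕ → Fin 3 := fun n => salemDigit p (salemOrbit p x n) with hγ
  refine ⟨γ, ?_⟩
  have hsummable := summable_term p hp hsum γ
  have hnorm : Summable fun k => ‖salemBeta p (γ k) * ∏ r ∈ Finset.range k, p (γ r)‖ :=
    hsummable.abs.congr (fun k => (Real.norm_eq_abs _).symm)
  have htend0 : Filter.Tendsto
      (fun n => (∏ r ∈ Finset.range n, p (γ r)) * salemOrbit p x n)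
      Filter.atTop (nhds 0) := by
    apply squeeze_zero (g := fun n => salemQ p ^ n)
    · intro n
      exact mul_nonneg (prod_nonneg' p hp γ n) (orbit_mem p hp hsum hx n).1
    · intro n
      calc (∏ r ∈ Finset.range n, p (γ r)) * salemOrbit p x n
          ≤ (salemQ p ^ n) * 1 := mul_le_mul (prod_le_q_pow p hp γ n)
            (orbit_mem p hp hsum hx n).2 (orbit_mem p hp hsum hx n).1
            (pow_nonneg (q_pos p hp).le n)
        _ = salemQ p ^ n := mul_one _
    · exact tendsto_pow_atTop_nhds_zero_of_lt_one (q_pos p hp).le (q_lt_one p hp)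
  have hpartial : ∀ n : ℕ,
      (∑ k ∈ Finset.range n, salemBeta p (γ k) * ∏ r ∈ Finset.range k, p (γ r))
        = x - (∏ r ∈ Finset.range n, p (γ r)) * salemOrbit p x n := by
    intro n
    have := orbit_key p hp (x := x) n
    linarith [this]
  have hHasSum : HasSum (fun k => salemBeta p (γ k) * ∏ r ∈ Finset.range k, p (γ r)) x := by
    rw [hasSum_iff_tendsto_nat_of_summable_norm hnorm]
    simp only [hpartial]
    simpa using (tendsto_const_nhds.sub htend0 :
      Filter.Tendsto (fun n => x - (∏ r ∈ Finset.range n, p (γ r)) * salemOrbit p x n) _ _)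
  exact hHasSum.tsum_eq

end SalemAux

/-- The Lebesgue measure of a cylinder is the product of the probabilities of its base
digits; equivalently the difference of its endpoints is this product. -/
theorem cylinder_measure (p : Fin 3 → ℝ) (hp : ∀ i, 0 < p i ∧ p i < 1)
    (hsum : p 0 + p 1 + p 2 = 1) (m : ℕ) (c : ℕ → Fin 3) :
    MeasureTheory.volume (cylinder p m c) =
        ENNReal.ofReal (∏ r ∈ Finset.range m, p (c r)) ∧
      salemVal p (extendW m c 2) - salemVal p (extendW m c 0) =
        ∏ r ∈ Finset.range m, p (c r) := by
  set L : ℝ := ∏ r ∈ Finset.range m, p (c r) with hL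
  set S : ℝ := ∑ k ∈ Finset.range m, salemBeta p (c k) * ∏ r ∈ Finset.range k, p (c r) with hS
  have hLpos : 0 < L := Finset.prod_pos fun i _ => (hp (c i)).1
  -- for any γ agreeing with c on the first m digits, the head data agrees
  have hagree : ∀ γ : ℕ → Fin 3, (∀ r < m, γ r = c r) →
      (∑ k ∈ Finset.range m, salemBeta p (γ k) * ∏ r ∈ Finset.range k, p (γ r)) = S ∧
      (∏ r ∈ Finset.range m, p (γ r)) = L := by
    intro γ hpre
    constructor
    · refine Finset.sum_congr rfl fun k hk => ?_
      have hk' := Finset.mem_range.mp hk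
      rw [hpre k hk']
      congr 1
      exact Finset.prod_congr rfl fun r hr =>
        by rw [hpre r (lt_trans (Finset.mem_range.mp hr) hk')]
    · exact Finset.prod_congr rfl fun r hr => by rw [hpre r (Finset.mem_range.mp hr)]
  -- values of the two endpoint sequences
  have hshift : ∀ j : Fin 3, (fun k => extendW m c j (k + m)) = (fun _ => j) := by
    intro j; funext k; simp [extendW]
  have hpre : ∀ j : Fin 3, ∀ r < m, extendW m c j r = c r := by
    intro j r hr; simp [extendW, hr]
  have hval : ∀ j : Fin 3, salemVal p (extendW m c j) =
      S + L * salemVal p (fun _ => j) := by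
    intro j
    rw [val_shift p hp hsum (extendW m c j) m, hshift j,
      (hagree _ (hpre j)).1, (hagree _ (hpre j)).2]
  have hval0 : salemVal p (extendW m c 0) = S := by
    rw [hval 0, val_const_zero]; ring
  have hval2 : salemVal p (extendW m c 2) = S + L := by
    rw [hval 2, val_const_two p hp hsum]; ring
  have hicc : cylinder p m c = Set.Icc S (S + L) := by
    ext x
    constructor
    · rintro ⟨γ, hγpre, rfl⟩
      rw [val_shift p hp hsum γ m, (hagree γ hγpre).1, (hagree γ hγpre).2]
      have h0 := val_nonneg p hp (fun k => γ (k + m))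
      have h1 := val_le_one p hp hsum (fun k => γ (k + m))
      constructor
      · nlinarith
      · nlinarith
    · intro hx
      obtain ⟨hx1, hx2⟩ := hx
      have hy : (x - S) / L ∈ Set.Icc (0:ℝ) 1 := by
        constructor
        · exact div_nonneg (by linarith) hLpos.le
        · rw [div_le_one hLpos]; linarith
      obtain ⟨δ, hδ⟩ := val_surj p hp hsum hy
      refine ⟨fun k => if k < m then c k else δ (k - m), fun r hr => by simp [hr], ?_⟩
      have hγpre : ∀ r < m, (fun k => if k < m then c k else δ (k - m)) r = c r :=
        fun r hr => by simp [hr]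
      rw [val_shift p hp hsum _ m, (hagree _ hγpre).1, (hagree _ hγpre).2]
      have hsh : (fun k => if k + m < m then c (k + m) else δ (k + m - m)) = δ := by
        funext k
        simp
      rw [hsh, hδ]
      field_simp
      ring
  constructor
  · rw [hicc, Real.volume_Icc]
    congr 1
    ring
  · rw [hval0, hval2]; ring
end

section
/- Cylinders of the same rank with a common base are situated from left to right and touch at their endpoints: for any finite word c₁, …, c_{m-1} of digits in {0,1,2} and any digit j ∈ {0,1}, the supremum of the cylinder Λ_{c₁…c_{m-1} j} equals the infimum of the cylinder Λ_{c₁…c_{m-1} (j+1)}; i.e., val(c₁…c_{m-1}[j+1](0)) − val(c₁…c_{m-1}j(2)) = 0. -/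
open scoped BigOperators

lemma salemBeta_zero (p : Fin 3 → ℝ) : salemBeta p 0 = 0 := by
  simp [salemBeta, Finset.sum_filter, Fin.sum_univ_three]
lemma salemBeta_one (p : Fin 3 → ℝ) : salemBeta p 1 = p 0 := by
  simp [salemBeta, Finset.sum_filter, Fin.sum_univ_three]
lemma salemBeta_two (p : Fin 3 → ℝ) : salemBeta p 2 = p 0 + p 1 := by
  simp [salemBeta, Finset.sum_filter, Fin.sum_univ_three]

noncomputable def sTerm (p : Fin 3 → ℝ) (γ : ℕ → Fin 3) (k : ℕ) : ℝ :=
  salemBeta p (γ k) * ∏ r ∈ Finset.range k, p (γ r)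

lemma salemVal_eq (p : Fin 3 → ℝ) (γ : ℕ → Fin 3) : salemVal p γ = ∑' k, sTerm p γ k := rfl

section
variable {p : Fin 3 → ℝ}

lemma salemBeta_nonneg (hp : ∀ i, 0 < p i ∧ p i < 1) (j : Fin 3) : 0 ≤ salemBeta p j :=
  Finset.sum_nonneg fun t _ => (hp t).1.le

lemma salemBeta_add_le (hp : ∀ i, 0 < p i ∧ p i < 1) (hsum : p 0 + p 1 + p 2 = 1) (j : Fin 3) : salemBeta p j + p j ≤ 1 := by
  have h0 := (hp 0).1; have h1 := (hp 1).1; have h2 := (hp 2).1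
  fin_cases j <;> simp [salemBeta_zero, salemBeta_one, salemBeta_two] <;> linarith

lemma prod_pos (hp : ∀ i, 0 < p i ∧ p i < 1) (γ : ℕ → Fin 3) (n : ℕ) : 0 < ∏ r ∈ Finset.range n, p (γ r) :=
  Finset.prod_pos fun r _ => (hp (γ r)).1

lemma sTerm_nonneg (hp : ∀ i, 0 < p i ∧ p i < 1) (γ : ℕ → Fin 3) (k : ℕ) : 0 ≤ sTerm p γ k :=
  mul_nonneg (salemBeta_nonneg hp _) (prod_pos hp γ k).le

lemma sum_sTerm_le (hp : ∀ i, 0 < p i ∧ p i < 1) (hsum : p 0 + p 1 + p 2 = 1) (γ : ℕ → Fin 3) (n : ℕ) :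
    ∑ k ∈ Finset.range n, sTerm p γ k ≤ 1 - ∏ r ∈ Finset.range n, p (γ r) := by
  induction n with
  | zero => simp
  | succ n ih =>
    rw [Finset.sum_range_succ, Finset.prod_range_succ]
    have hb : sTerm p γ n ≤ (1 - p (γ n)) * ∏ r ∈ Finset.range n, p (γ r) := by
      apply mul_le_mul_of_nonneg_right _ (prod_pos hp γ n).le
      have := salemBeta_add_le hp hsum (γ n); linarith
    nlinarith [prod_pos hp γ n]

lemma summable_sTerm (hp : ∀ i, 0 < p i ∧ p i < 1) (hsum : p 0 + p 1 + p 2 = 1) (γ : ℕ → Fin 3) : Summable (sTerm p γ) := by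
  apply summable_of_sum_range_le (c := 1) (fun k => sTerm_nonneg hp γ k)
  intro n
  have := sum_sTerm_le hp hsum γ n
  have := (prod_pos hp γ n).le
  linarith

lemma salemVal_nonneg (hp : ∀ i, 0 < p i ∧ p i < 1) (γ : ℕ → Fin 3) : 0 ≤ salemVal p γ :=
  tsum_nonneg (sTerm_nonneg hp γ)

lemma salemVal_le_one (hp : ∀ i, 0 < p i ∧ p i < 1) (hsum : p 0 + p 1 + p 2 = 1) (γ : ℕ → Fin 3) : salemVal p γ ≤ 1 := by
  rw [salemVal_eq]
  apply Real.tsum_le_of_sum_range_le (sTerm_nonneg hp γ)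
  intro n
  have := sum_sTerm_le hp hsum γ n
  have := (prod_pos hp γ n).le
  linarith

lemma salemVal_split (hp : ∀ i, 0 < p i ∧ p i < 1) (hsum : p 0 + p 1 + p 2 = 1) (γ : ℕ → Fin 3) (n : ℕ) :
    salemVal p γ = ∑ k ∈ Finset.range n, sTerm p γ k +
      (∏ r ∈ Finset.range n, p (γ r)) * salemVal p (fun k => γ (n + k)) := by
  rw [salemVal_eq, ← Summable.sum_add_tsum_nat_add n (summable_sTerm hp hsum γ)]
  congr 1
  rw [salemVal_eq, ← tsum_mul_left]
  apply tsum_congr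
  intro k
  rw [Nat.add_comm k n]
  unfold sTerm
  rw [Finset.prod_range_add]
  ring

lemma salemVal_const (hp : ∀ i, 0 < p i ∧ p i < 1) (j : Fin 3) :
    salemVal p (fun _ => j) = salemBeta p j * (1 - p j)⁻¹ := by
  rw [salemVal_eq]
  have : ∀ k, sTerm p (fun _ => j) k = salemBeta p j * p j ^ k := by
    intro k; unfold sTerm; simp
  rw [tsum_congr this, tsum_mul_left, tsum_geometric_of_lt_one (hp j).1.le (hp j).2]

lemma salemVal_const_zero (hp : ∀ i, 0 < p i ∧ p i < 1) : salemVal p (fun _ => (0:Fin 3)) = 0 := by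
  rw [salemVal_const hp, salemBeta_zero, zero_mul]

lemma salemVal_const_two (hp : ∀ i, 0 < p i ∧ p i < 1) (hsum : p 0 + p 1 + p 2 = 1) : salemVal p (fun _ => (2:Fin 3)) = 1 := by
  rw [salemVal_const hp, salemBeta_two]
  have h2 : p 2 < 1 := (hp 2).2
  have h2' : 1 - p 2 ≠ 0 := by linarith
  field_simp
  linarith

lemma sTerm_congr {γ γ' : ℕ → Fin 3} {k : ℕ} (h : ∀ r ≤ k, γ r = γ' r) :
    sTerm p γ k = sTerm p γ' k := by
  unfold sTerm
  rw [h k le_rfl]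
  congr 1
  exact Finset.prod_congr rfl fun r hr => by rw [h r (Finset.mem_range.mp hr).le]
end

/-- Consecutive cylinders of the same rank touch: for a digit `j ∈ {0,1}`,
the value of the word `c₁…c_m [j+1]` followed by constant tail 0 minus the value of
`c₁…c_m j` followed by constant tail 2 is zero; i.e. the supremum of the `j`-cylinder
equals the infimum of the `(j+1)`-cylinder. -/
theorem cylinders_left_to_right (p : Fin 3 → ℝ) (hp : ∀ i, 0 < p i ∧ p i < 1)
    (hsum : p 0 + p 1 + p 2 = 1) (m : ℕ) (c : ℕ → Fin 3) (j : Fin 3) (hj : (j : ℕ) < 2) :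
    salemVal p (extendW (m + 1) (fun k => if k = m then j + 1 else c k) 0) -
        salemVal p (extendW (m + 1) (fun k => if k = m then j else c k) 2) = 0 ∧
      sSup (cylinder p (m + 1) (fun k => if k = m then j else c k)) =
        sInf (cylinder p (m + 1) (fun k => if k = m then j + 1 else c k)) := by
  set c0 : ℕ → Fin 3 := fun k => if k = m then j else c k with hc0
  set c1 : ℕ → Fin 3 := fun k => if k = m then j + 1 else c k with hc1
  set γ0 : ℕ → Fin 3 := extendW (m + 1) c1 0 with hγ0
  set γ2 : ℕ → Fin 3 := extendW (m + 1) c0 2 with hγ2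
  -- basic facts about the sequences
  have hγ0lt : ∀ r < m + 1, γ0 r = c1 r := fun r hr => if_pos hr
  have hγ2lt : ∀ r < m + 1, γ2 r = c0 r := fun r hr => if_pos hr
  have hc01 : ∀ r < m, c0 r = c1 r := by
    intro r hr; simp only [hc0, hc1, if_neg (Nat.ne_of_lt hr)]
  have hγ02 : ∀ r < m, γ0 r = γ2 r := by
    intro r hr
    rw [hγ0lt r (hr.trans (Nat.lt_succ_self m)), hγ2lt r (hr.trans (Nat.lt_succ_self m)),
      hc01 r hr]
  have hγ0m : γ0 m = j + 1 := by
    rw [hγ0lt m (Nat.lt_succ_self m)]; simp [hc1]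
  have hγ2m : γ2 m = j := by
    rw [hγ2lt m (Nat.lt_succ_self m)]; simp [hc0]
  -- tails
  have hshift0 : (fun k => γ0 (m + 1 + k)) = fun _ => (0 : Fin 3) := by
    funext k; exact if_neg (by omega)
  have hshift2 : (fun k => γ2 (m + 1 + k)) = fun _ => (2 : Fin 3) := by
    funext k; exact if_neg (by omega)
  -- beta recursion
  have hβ : salemBeta p (j + 1) = salemBeta p j + p j := by
    fin_cases j
    · show salemBeta p 1 = salemBeta p 0 + p 0
      rw [salemBeta_zero, salemBeta_one]; ring
    · show salemBeta p 2 = salemBeta p 1 + p 1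
      rw [salemBeta_one, salemBeta_two]
    · simp at hj
  -- common quantities
  have hW : ∏ r ∈ Finset.range m, p (γ0 r) = ∏ r ∈ Finset.range m, p (γ2 r) :=
    Finset.prod_congr rfl fun r hr => by rw [hγ02 r (Finset.mem_range.mp hr)]
  have hS : ∑ k ∈ Finset.range m, sTerm p γ0 k = ∑ k ∈ Finset.range m, sTerm p γ2 k :=
    Finset.sum_congr rfl fun k hk =>
      sTerm_congr fun r hr => hγ02 r (lt_of_le_of_lt hr (Finset.mem_range.mp hk))
  -- values
  have hval0 : salemVal p γ0 = ∑ k ∈ Finset.range m, sTerm p γ0 k +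
      salemBeta p (j + 1) * ∏ r ∈ Finset.range m, p (γ0 r) := by
    rw [salemVal_split hp hsum γ0 (m + 1), hshift0, salemVal_const_zero hp,
      Finset.sum_range_succ]
    unfold sTerm
    rw [hγ0m]; ring
  have hval2 : salemVal p γ2 = ∑ k ∈ Finset.range m, sTerm p γ2 k +
      (salemBeta p j + p j) * ∏ r ∈ Finset.range m, p (γ2 r) := by
    rw [salemVal_split hp hsum γ2 (m + 1), hshift2, salemVal_const_two hp hsum,
      Finset.sum_range_succ, Finset.prod_range_succ]
    unfold sTerm
    rw [hγ2m]; ring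
  have hdiff : salemVal p γ0 - salemVal p γ2 = 0 := by
    rw [hval0, hval2, hβ, hS, hW]; ring
  refine ⟨hdiff, ?_⟩
  -- sup of lower cylinder
  have hub : ∀ x ∈ cylinder p (m + 1) c0, x ≤ salemVal p γ2 := by
    rintro x ⟨γ, hγ, rfl⟩
    have hag : ∀ r < m + 1, γ r = γ2 r := fun r hr => (hγ r hr).trans (hγ2lt r hr).symm
    rw [salemVal_split hp hsum γ (m + 1), salemVal_split hp hsum γ2 (m + 1), hshift2,
      salemVal_const_two hp hsum]
    have hSeq : ∑ k ∈ Finset.range (m + 1), sTerm p γ k =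
        ∑ k ∈ Finset.range (m + 1), sTerm p γ2 k :=
      Finset.sum_congr rfl fun k hk =>
        sTerm_congr fun r hr => hag r (lt_of_le_of_lt hr (Finset.mem_range.mp hk))
    have hWeq : ∏ r ∈ Finset.range (m + 1), p (γ r) = ∏ r ∈ Finset.range (m + 1), p (γ2 r) :=
      Finset.prod_congr rfl fun r hr => by rw [hag r (Finset.mem_range.mp hr)]
    rw [hSeq, hWeq, mul_one]
    have h1 : salemVal p (fun k => γ (m + 1 + k)) ≤ 1 := salemVal_le_one hp hsum _
    have h2 : 0 < ∏ r ∈ Finset.range (m + 1), p (γ2 r) := prod_pos hp γ2 (m + 1)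
    nlinarith
  have hlb : ∀ x ∈ cylinder p (m + 1) c1, salemVal p γ0 ≤ x := by
    rintro x ⟨γ, hγ, rfl⟩
    have hag : ∀ r < m + 1, γ r = γ0 r := fun r hr => (hγ r hr).trans (hγ0lt r hr).symm
    rw [salemVal_split hp hsum γ (m + 1), salemVal_split hp hsum γ0 (m + 1), hshift0,
      salemVal_const_zero hp]
    have hSeq : ∑ k ∈ Finset.range (m + 1), sTerm p γ0 k =
        ∑ k ∈ Finset.range (m + 1), sTerm p γ k :=
      Finset.sum_congr rfl fun k hk =>
        (sTerm_congr fun r hr => hag r (lt_of_le_of_lt hr (Finset.mem_range.mp hk))).symm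
    rw [hSeq, mul_zero, add_zero]
    have h1 : 0 ≤ salemVal p (fun k => γ (m + 1 + k)) := salemVal_nonneg hp _
    have h2 : 0 < ∏ r ∈ Finset.range (m + 1), p (γ r) := prod_pos hp γ (m + 1)
    nlinarith
  have hmem2 : salemVal p γ2 ∈ cylinder p (m + 1) c0 := ⟨γ2, hγ2lt, rfl⟩
  have hmem0 : salemVal p γ0 ∈ cylinder p (m + 1) c1 := ⟨γ0, hγ0lt, rfl⟩
  have e1 : sSup (cylinder p (m + 1) c0) = salemVal p γ2 :=
    IsGreatest.csSup_eq ⟨hmem2, hub⟩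
  have e2 : sInf (cylinder p (m + 1) c1) = salemVal p γ0 :=
    IsLeast.csInf_eq ⟨hmem0, hlb⟩
  rw [e1, e2]
  linarith
end

section
/- The map induced by the digit operator θ does not preserve distances: if p₁ ≠ p₂, then for the sequences γ = (2,2,0,0,0,…) and δ = (2,1,0,0,0,…) one has |val(γ) − val(δ)| = p₁·p₂ while |val(θ∘γ) − val(θ∘δ)| = p₁², and these two quantities are different; hence there exist points x₁, x₂ ∈ [0,1] with |f(x₁) − f(x₂)| ≠ |x₁ − x₂|, where f sends val(γ) to val(θ∘γ). -/
open scoped BigOperators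

lemma salemVal_eventually_zero (p : Fin 3 → ℝ) (γ : ℕ → Fin 3)
    (h : ∀ k, 2 ≤ k → γ k = 0) :
    salemVal p γ = salemBeta p (γ 0) + salemBeta p (γ 1) * p (γ 0) := by
  rw [salemVal, tsum_eq_sum (s := Finset.range 2)]
  · simp [Finset.sum_range_succ]
  · intro b hb
    rw [h b (by simp at hb; omega), salemBeta_zero]
    ring

/-- θ does not preserve distances: if `p 1 ≠ p 2`, then for γ = (2,2,0,0,…) and
δ = (2,1,0,0,…) one has `|val γ - val δ| = p 1 * p 2`,
`|val (θ∘γ) - val (θ∘δ)| = p 1 ^ 2`, and these are different; in particular the points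
`x₁ = val γ`, `x₂ = val δ` of `[0,1]` satisfy `|f x₁ - f x₂| ≠ |x₁ - x₂|` for the map
`f : val γ ↦ val (θ∘γ)`. -/
theorem theta_not_distance_preserving (p : Fin 3 → ℝ) (hp : ∀ i, 0 < p i ∧ p i < 1)
    (hsum : p 0 + p 1 + p 2 = 1) (hne : p 1 ≠ p 2) :
    |salemVal p (fun k => if k = 0 then 2 else if k = 1 then 2 else 0) -
        salemVal p (fun k => if k = 0 then 2 else if k = 1 then 1 else 0)| = p 1 * p 2 ∧
      |salemVal p (fun k => theta (if k = 0 then 2 else if k = 1 then 2 else 0)) -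
        salemVal p (fun k => theta (if k = 0 then 2 else if k = 1 then 1 else 0))| =
          p 1 ^ 2 ∧
      salemVal p (fun k => if k = 0 then 2 else if k = 1 then 2 else 0) ∈
        Set.Icc (0 : ℝ) 1 ∧
      salemVal p (fun k => if k = 0 then 2 else if k = 1 then 1 else 0) ∈
        Set.Icc (0 : ℝ) 1 ∧
      |salemVal p (fun k => theta (if k = 0 then 2 else if k = 1 then 2 else 0)) -
        salemVal p (fun k => theta (if k = 0 then 2 else if k = 1 then 1 else 0))| ≠
        |salemVal p (fun k => if k = 0 then 2 else if k = 1 then 2 else 0) -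
          salemVal p (fun k => if k = 0 then 2 else if k = 1 then 1 else 0)| := by
  have h1 := (hp 1).1
  have h2 := (hp 2).1
  have h1' := (hp 1).2
  have h2' := (hp 2).2
  have h0 := (hp 0).1
  have e1 : salemVal p (fun k => if k = 0 then 2 else if k = 1 then 2 else 0)
      = (p 0 + p 1) + (p 0 + p 1) * p 2 := by
    rw [salemVal_eventually_zero]
    · simp [salemBeta_two]
    · intro k hk; simp [Nat.ne_of_gt (lt_of_lt_of_le one_lt_two hk),
        Nat.ne_of_gt (lt_of_lt_of_le Nat.zero_lt_two hk)]
  have e2 : salemVal p (fun k => if k = 0 then 2 else if k = 1 then 1 else 0)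
      = (p 0 + p 1) + p 0 * p 2 := by
    rw [salemVal_eventually_zero]
    · simp [salemBeta_two, salemBeta_one]
    · intro k hk; simp [Nat.ne_of_gt (lt_of_lt_of_le one_lt_two hk),
        Nat.ne_of_gt (lt_of_lt_of_le Nat.zero_lt_two hk)]
  have e3 : salemVal p (fun k => theta (if k = 0 then 2 else if k = 1 then 2 else 0))
      = p 0 + p 0 * p 1 := by
    rw [salemVal_eventually_zero]
    · simp [theta, salemBeta_one]
    · intro k hk; simp [theta, Nat.ne_of_gt (lt_of_lt_of_le one_lt_two hk),
        Nat.ne_of_gt (lt_of_lt_of_le Nat.zero_lt_two hk)]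
  have e4 : salemVal p (fun k => theta (if k = 0 then 2 else if k = 1 then 1 else 0))
      = p 0 + (p 0 + p 1) * p 1 := by
    rw [salemVal_eventually_zero]
    · simp [theta, salemBeta_one, salemBeta_two]
    · intro k hk; simp [theta, Nat.ne_of_gt (lt_of_lt_of_le one_lt_two hk),
        Nat.ne_of_gt (lt_of_lt_of_le Nat.zero_lt_two hk)]
  have habs1 : |salemVal p (fun k => if k = 0 then 2 else if k = 1 then 2 else 0) -
      salemVal p (fun k => if k = 0 then 2 else if k = 1 then 1 else 0)| = p 1 * p 2 := by
    rw [e1, e2]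
    rw [show (p 0 + p 1) + (p 0 + p 1) * p 2 - ((p 0 + p 1) + p 0 * p 2) = p 1 * p 2 by ring]
    exact abs_of_pos (mul_pos h1 h2)
  have habs2 : |salemVal p (fun k => theta (if k = 0 then 2 else if k = 1 then 2 else 0)) -
      salemVal p (fun k => theta (if k = 0 then 2 else if k = 1 then 1 else 0))| = p 1 ^ 2 := by
    rw [e3, e4]
    rw [show p 0 + p 0 * p 1 - (p 0 + (p 0 + p 1) * p 1) = -(p 1 ^ 2) by ring, abs_neg]
    exact abs_of_pos (pow_pos h1 2)
  refine ⟨habs1, habs2, ?_, ?_, ?_⟩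
  · rw [e1]
    constructor
    · positivity
    · nlinarith
  · rw [e2]
    constructor
    · positivity
    · nlinarith
  · rw [habs1, habs2]
    intro h
    exact hne (by nlinarith)
end

section
/- Probabilistic interpretation of the Salem function: let q ≥ 2 be an integer and p₀, …, p_{q-1} ∈ (0,1) with Σ_{t=0}^{q-1} p_t = 1, and let μ be the infinite product measure on {0,…,q−1}^ℕ in which each coordinate independently takes value t with probability p_t. Let η : {0,…,q−1}^ℕ → ℝ be the map η(ξ) = Σ_{k=1}^∞ ξ_k / q^k. Then for every x ∈ [0,1] with q-ary digits (i_k) (i.e., x = Σ_{k=1}^∞ i_k/q^k), the measure of the event {η < x} equals β_{i₁} + Σ_{k=2}^∞ β_{i_k} · ∏_{r=1}^{k-1} p_{i_r}, where β_j = Σ_{t<j} p_t; that is, the cumulative distribution function of the pushforward of μ under η is the Salem function S determined by (p_t). -/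
open scoped BigOperators
open MeasureTheory Filter

/-- `β j = ∑_{t < j} p t` for digits in `{0, …, q-1}`. -/
noncomputable def salemBetaQ (q : ℕ) (p : Fin q → ℝ) (j : Fin q) : ℝ :=
  ∑ t ∈ Finset.univ.filter (fun t => t < j), p t

/-- The `P_q`-value of a digit sequence `γ : ℕ → {0, …, q-1}` (indexed from 0):
`β (γ 0) + ∑_{k ≥ 1} β (γ k) · ∏_{r < k} p (γ r)`. -/
noncomputable def salemValQ (q : ℕ) (p : Fin q → ℝ) (γ : ℕ → Fin q) : ℝ :=
  ∑' k : ℕ, salemBetaQ q p (γ k) * ∏ r ∈ Finset.range k, p (γ r)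

namespace SalemAux

variable {q : ℕ}

noncomputable def eta (q : ℕ) (γ : ℕ → Fin q) : ℝ :=
  ∑' k : ℕ, (γ k : ℝ) / (q : ℝ) ^ (k + 1)

noncomputable def tail (q : ℕ) (γ : ℕ → Fin q) (n : ℕ) : ℝ :=
  ∑' r : ℕ, (γ (r + n) : ℝ) / (q : ℝ) ^ (r + n + 1)

lemma qpos (hq : 2 ≤ q) : (0:ℝ) < q := by
  have : (2:ℝ) ≤ q := by exact_mod_cast hq
  linarith

lemma qone (hq : 2 ≤ q) : (1:ℝ) < q := by
  have : (2:ℝ) ≤ q := by exact_mod_cast hq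
  linarith

lemma inv_lt (hq : 2 ≤ q) : (1:ℝ)/q < 1 := by
  rw [div_lt_one (qpos hq)]; exact qone hq

lemma digit_le (γ : ℕ → Fin q) (k : ℕ) : (γ k : ℝ) ≤ (q:ℝ) - 1 := by
  have h := (γ k).isLt
  have : ((γ k : ℕ) : ℝ) + 1 ≤ (q : ℝ) := by exact_mod_cast h
  linarith

lemma summable_digits (hq : 2 ≤ q) (γ : ℕ → Fin q) :
    Summable (fun k => (γ k : ℝ) / (q : ℝ) ^ (k + 1)) := by
  have hq0 := qpos hq
  refine Summable.of_nonneg_of_le (f := fun k => ((1:ℝ)/(q:ℝ))^k)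
    (fun k => by positivity) (fun k => ?_)
    (summable_geometric_of_lt_one (by positivity) (inv_lt hq))
  have h1 : (γ k : ℝ) ≤ (q:ℝ) := by linarith [digit_le γ k]
  calc (γ k : ℝ) / (q:ℝ)^(k+1) ≤ (q:ℝ) / (q:ℝ)^(k+1) := by gcongr
    _ = ((1:ℝ)/q)^k := by
        rw [div_pow, one_pow, pow_succ, div_eq_div_iff (by positivity) (by positivity)]
        ring

lemma summable_tail (hq : 2 ≤ q) (γ : ℕ → Fin q) (n : ℕ) :
    Summable (fun r => (γ (r + n) : ℝ) / (q : ℝ) ^ (r + n + 1)) := by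
  have := (summable_nat_add_iff n).mpr (summable_digits hq γ)
  exact this.congr (fun r => by norm_num)

lemma eta_split (hq : 2 ≤ q) (γ : ℕ → Fin q) (n : ℕ) :
    eta q γ = (∑ r ∈ Finset.range n, (γ r : ℝ) / (q:ℝ)^(r+1)) + tail q γ n :=
  (Summable.sum_add_tsum_nat_add n (summable_digits hq γ)).symm

lemma tail_nonneg (γ : ℕ → Fin q) (n : ℕ) : 0 ≤ tail q γ n :=
  tsum_nonneg fun r => by positivity

lemma geom_term (hq : 2 ≤ q) (n : ℕ) : ∀ r : ℕ,
    ((q:ℝ)-1) / (q:ℝ)^(r+n+1) = (((q:ℝ)-1)/(q:ℝ)^(n+1)) * ((1:ℝ)/q)^r := by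
  intro r
  rw [div_pow, one_pow, div_mul_div_comm, mul_one, ← pow_add]
  congr 2
  omega

lemma summable_geom (hq : 2 ≤ q) (n : ℕ) :
    Summable (fun r : ℕ => ((q:ℝ)-1) / (q:ℝ)^(r+n+1)) := by
  refine Summable.congr (((summable_geometric_of_lt_one (by positivity)
    (inv_lt hq)).mul_left (((q:ℝ)-1)/(q:ℝ)^(n+1)))) (fun r => (geom_term hq n r).symm)

lemma geom_sum (hq : 2 ≤ q) (n : ℕ) :
    ∑' r : ℕ, ((q:ℝ)-1) / (q:ℝ)^(r+n+1) = 1 / (q:ℝ)^n := by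
  have hq0 := qpos hq
  have hq1 := qone hq
  calc ∑' r : ℕ, ((q:ℝ)-1) / (q:ℝ)^(r+n+1)
      = ∑' r : ℕ, (((q:ℝ)-1)/(q:ℝ)^(n+1)) * ((1:ℝ)/q)^r := by
        exact tsum_congr (geom_term hq n)
    _ = (((q:ℝ)-1)/(q:ℝ)^(n+1)) * (1 - 1/(q:ℝ))⁻¹ := by
        have hg : ∑' r : ℕ, ((1:ℝ)/(q:ℝ))^r = (1 - 1/(q:ℝ))⁻¹ :=
          tsum_geometric_of_lt_one (by positivity) (inv_lt hq)
        rw [tsum_mul_left, hg]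
    _ = 1 / (q:ℝ)^n := by
        have h1 : (1:ℝ) - 1/(q:ℝ) = ((q:ℝ)-1)/(q:ℝ) := by field_simp
        have h2 : (q:ℝ) - 1 ≠ 0 := by linarith
        have h3 : (q:ℝ) ≠ 0 := ne_of_gt hq0
        rw [h1, inv_div, div_mul_div_comm]
        rw [div_eq_div_iff (by positivity) (by positivity)]
        ring

lemma tail_le (hq : 2 ≤ q) (γ : ℕ → Fin q) (n : ℕ) : tail q γ n ≤ 1 / (q:ℝ)^n := by
  rw [← geom_sum hq n]
  refine Summable.tsum_le_tsum (fun r => ?_) (summable_tail hq γ n) (summable_geom hq n)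
  have := digit_le γ (r + n)
  gcongr

lemma tail_rigid (hq : 2 ≤ q) (γ : ℕ → Fin q) (n : ℕ) (h : tail q γ n = 1 / (q:ℝ)^n) :
    ∀ r : ℕ, (γ (r + n) : ℕ) = q - 1 := by
  by_contra hcon
  push_neg at hcon
  obtain ⟨r0, hr0⟩ := hcon
  have hlt : (γ (r0 + n) : ℝ) < (q:ℝ) - 1 := by
    have h1 : (γ (r0 + n) : ℕ) < q - 1 := by
      have := (γ (r0 + n)).isLt; omega
    have : ((γ (r0 + n) : ℕ) : ℝ) < ((q - 1 : ℕ) : ℝ) := by exact_mod_cast h1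
    rwa [Nat.cast_sub (by omega), Nat.cast_one] at this
  have hstrict : tail q γ n < ∑' r : ℕ, ((q:ℝ)-1) / (q:ℝ)^(r+n+1) := by
    refine Summable.tsum_lt_tsum (i := r0) (fun r => ?_) ?_ (summable_tail hq γ n) (summable_geom hq n)
    · have := digit_le γ (r + n)
      gcongr
    · have hq0 := qpos hq
      have hP : (0:ℝ) < (q:ℝ)^(r0+n+1) := by positivity
      exact (div_lt_div_iff_of_pos_right hP).mpr hlt
  rw [geom_sum hq n] at hstrict
  exact absurd h (ne_of_lt hstrict)

lemma eta_le (hq : 2 ≤ q) {γ δ : ℕ → Fin q} {k : ℕ}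
    (hpre : ∀ r < k, γ r = δ r) (hk : (γ k : ℕ) < (δ k : ℕ)) :
    eta q γ ≤ eta q δ := by
  have hq0 := qpos hq
  rw [eta_split hq γ (k+1), eta_split hq δ (k+1)]
  rw [Finset.sum_range_succ, Finset.sum_range_succ]
  have hpre' : ∑ r ∈ Finset.range k, (γ r : ℝ) / (q:ℝ)^(r+1)
      = ∑ r ∈ Finset.range k, (δ r : ℝ) / (q:ℝ)^(r+1) :=
    Finset.sum_congr rfl fun r hr => by rw [hpre r (Finset.mem_range.mp hr)]
  rw [hpre']
  have hP : (0:ℝ) < (q:ℝ)^(k+1) := by positivity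
  have h1 : tail q γ (k+1) ≤ 1 / (q:ℝ)^(k+1) := tail_le hq γ (k+1)
  have h2 : (0:ℝ) ≤ tail q δ (k+1) := tail_nonneg δ (k+1)
  have h3 : (γ k : ℝ) + 1 ≤ (δ k : ℝ) := by exact_mod_cast hk
  have h4 : ((γ k : ℝ) + 1) / (q:ℝ)^(k+1) ≤ (δ k : ℝ) / (q:ℝ)^(k+1) := by gcongr
  have h5 : ((γ k : ℝ) + 1) / (q:ℝ)^(k+1)
      = (γ k : ℝ) / (q:ℝ)^(k+1) + 1 / (q:ℝ)^(k+1) := add_div _ _ _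
  linarith

lemma exists_lt_digit (hq : 2 ≤ q) {ξ i : ℕ → Fin q} (h : eta q ξ < eta q i) :
    ∃ k, (∀ r < k, ξ r = i r) ∧ (ξ k : ℕ) < (i k : ℕ) := by
  classical
  have hne : ξ ≠ i := by
    rintro rfl; exact lt_irrefl _ h
  have hex : ∃ k, ξ k ≠ i k := Function.ne_iff.mp hne
  set k := Nat.find hex with hkdef
  have hk : ξ k ≠ i k := Nat.find_spec hex
  have hpre : ∀ r < k, ξ r = i r := fun r hr => not_not.mp (Nat.find_min hex hr)
  have hkval : (ξ k : ℕ) ≠ (i k : ℕ) := fun hv => hk (Fin.ext hv)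
  rcases lt_or_gt_of_ne hkval with hlt | hgt
  · exact ⟨k, hpre, hlt⟩
  · exact absurd (eta_le hq (fun r hr => (hpre r hr).symm) hgt) (not_le.mpr h)

lemma rigidity (hq : 2 ≤ q) {ξ i : ℕ → Fin q} {k : ℕ}
    (hpre : ∀ r < k, ξ r = i r) (hk : (ξ k : ℕ) < (i k : ℕ))
    (heq : eta q ξ = eta q i) :
    ((ξ k : ℕ) + 1 = (i k : ℕ)) ∧ ∀ r, k < r → (ξ r : ℕ) = q - 1 := by
  have hq0 := qpos hq
  have hsplit := heq
  rw [eta_split hq ξ (k+1), eta_split hq i (k+1),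
    Finset.sum_range_succ, Finset.sum_range_succ] at hsplit
  have hpre' : ∑ r ∈ Finset.range k, (ξ r : ℝ) / (q:ℝ)^(r+1)
      = ∑ r ∈ Finset.range k, (i r : ℝ) / (q:ℝ)^(r+1) :=
    Finset.sum_congr rfl fun r hr => by rw [hpre r (Finset.mem_range.mp hr)]
  rw [hpre'] at hsplit
  have hP : (0:ℝ) < (q:ℝ)^(k+1) := by positivity
  have h1 : tail q ξ (k+1) ≤ 1 / (q:ℝ)^(k+1) := tail_le hq ξ (k+1)
  have h2 : (0:ℝ) ≤ tail q i (k+1) := tail_nonneg i (k+1)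
  have h3 : (ξ k : ℝ) + 1 ≤ (i k : ℝ) := by exact_mod_cast hk
  have h4 : ((ξ k : ℝ) + 1) / (q:ℝ)^(k+1) ≤ (i k : ℝ) / (q:ℝ)^(k+1) := by gcongr
  have h5 : ((ξ k : ℝ) + 1) / (q:ℝ)^(k+1)
      = (ξ k : ℝ) / (q:ℝ)^(k+1) + 1 / (q:ℝ)^(k+1) := add_div _ _ _
  have e1 : tail q ξ (k+1) = 1 / (q:ℝ)^(k+1) := by linarith
  have e2 : ((ξ k : ℝ) + 1) / (q:ℝ)^(k+1) = (i k : ℝ) / (q:ℝ)^(k+1) := by linarith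
  have e3 : (ξ k : ℝ) + 1 = (i k : ℝ) := by
    field_simp at e2
    exact e2
  constructor
  · exact_mod_cast e3
  · intro r hr
    have := tail_rigid hq ξ (k+1) e1 (r - (k+1))
    rwa [Nat.sub_add_cancel (by omega)] at this

end SalemAux

section Helpers

open SalemAux

lemma salem_cyl_measurable {q : ℕ} (m : ℕ) (c : ℕ → Fin q) :
    MeasurableSet {ξ : ℕ → Fin q | ∀ r < m, ξ r = c r} := by
  have : {ξ : ℕ → Fin q | ∀ r < m, ξ r = c r}
      = ⋂ (r : ℕ) (_ : r < m), (fun ξ : ℕ → Fin q => ξ r) ⁻¹' {c r} := by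
    ext ξ; simp [Set.mem_iInter]
  rw [this]
  exact MeasurableSet.iInter fun r => MeasurableSet.iInter fun _ =>
    (measurable_pi_apply r) (measurableSet_singleton _)

lemma salem_null_singleton {q : ℕ} (hq : 2 ≤ q) (p : Fin q → ℝ)
    (hp : ∀ t, p t ∈ Set.Ioo (0 : ℝ) 1)
    (μ : MeasureTheory.Measure (ℕ → Fin q))
    (hμ : ∀ (m : ℕ) (c : ℕ → Fin q),
      μ { ξ | ∀ r < m, ξ r = c r } = ENNReal.ofReal (∏ r ∈ Finset.range m, p (c r)))
    (c : ℕ → Fin q) : μ {c} = 0 := by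
  have hne : (Finset.univ : Finset (Fin q)).Nonempty := ⟨⟨0, by omega⟩, Finset.mem_univ _⟩
  set M := Finset.univ.sup' hne p with hM
  have hM1 : M < 1 := (Finset.sup'_lt_iff hne).mpr fun t _ => (hp t).2
  have hM0 : 0 ≤ M :=
    le_trans (hp ⟨0, by omega⟩).1.le (Finset.le_sup' p (Finset.mem_univ _))
  have hprod : ∀ (d : ℕ → Fin q) (m : ℕ), ∏ r ∈ Finset.range m, p (d r) ≤ M ^ m := by
    intro d m
    induction m with
    | zero => simp
    | succ n ih =>
        rw [Finset.prod_range_succ, pow_succ]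
        exact mul_le_mul ih (Finset.le_sup' p (Finset.mem_univ _)) (hp _).1.le
          (pow_nonneg hM0 n)
  have hle : ∀ m, μ {c} ≤ ENNReal.ofReal (M ^ m) := by
    intro m
    calc μ {c} ≤ μ {ξ : ℕ → Fin q | ∀ r < m, ξ r = c r} := by
          refine measure_mono ?_
          rintro ξ rfl
          intro r _; rfl
      _ = ENNReal.ofReal (∏ r ∈ Finset.range m, p (c r)) := hμ m c
      _ ≤ ENNReal.ofReal (M ^ m) := ENNReal.ofReal_le_ofReal (hprod c m)
  have htend : Tendsto (fun m => ENNReal.ofReal (M ^ m)) atTop (nhds 0) := by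
    have h0 := tendsto_pow_atTop_nhds_zero_of_lt_one hM0 hM1
    have h1 := ENNReal.tendsto_ofReal h0
    simpa using h1
  exact le_antisymm (ge_of_tendsto' htend hle) zero_le

lemma salem_exists_bound {q : ℕ} (hq : 2 ≤ q) (p : Fin q → ℝ)
    (hp : ∀ t, p t ∈ Set.Ioo (0 : ℝ) 1) :
    ∃ M : ℝ, 0 ≤ M ∧ M < 1 ∧
      ∀ (c : ℕ → Fin q) (m : ℕ), ∏ r ∈ Finset.range m, p (c r) ≤ M ^ m := by
  have hne : (Finset.univ : Finset (Fin q)).Nonempty := ⟨⟨0, by omega⟩, Finset.mem_univ _⟩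
  set M := Finset.univ.sup' hne p with hM
  have hM0 : 0 ≤ M :=
    le_trans (hp ⟨0, by omega⟩).1.le (Finset.le_sup' p (Finset.mem_univ _))
  refine ⟨M, hM0, (Finset.sup'_lt_iff hne).mpr fun t _ => (hp t).2, ?_⟩
  intro c m
  induction m with
  | zero => simp
  | succ n ih =>
      rw [Finset.prod_range_succ, pow_succ]
      exact mul_le_mul ih (Finset.le_sup' p (Finset.mem_univ _)) (hp _).1.le
        (pow_nonneg hM0 n)

end Helpers

/-- Probabilistic interpretation of the Salem function: if `μ` is the infinite product
measure on `{0,…,q-1}^ℕ` in which each coordinate independently takes value `t` with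
probability `p t` (characterized by its values on cylinders), and
`η ξ = ∑_k ξ_k / q^(k+1)`, then for every `x ∈ [0,1]` with `q`-ary digit sequence `i`,
`μ {η < x}` equals the Salem value `β (i 0) + ∑_{k≥1} β (i k) ∏_{r<k} p (i r)`. -/
theorem salem_is_cdf (q : ℕ) (hq : 2 ≤ q) (p : Fin q → ℝ)
    (hp : ∀ t, p t ∈ Set.Ioo (0 : ℝ) 1) (hsum : ∑ t, p t = 1)
    (μ : MeasureTheory.Measure (ℕ → Fin q)) [MeasureTheory.IsProbabilityMeasure μ]
    (hμ : ∀ (m : ℕ) (c : ℕ → Fin q),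
      μ { ξ | ∀ r < m, ξ r = c r } = ENNReal.ofReal (∏ r ∈ Finset.range m, p (c r))) :
    ∀ x ∈ Set.Icc (0 : ℝ) 1, ∀ i : ℕ → Fin q,
      x = ∑' k : ℕ, (i k : ℝ) / (q : ℝ) ^ (k + 1) →
      μ { ξ : ℕ → Fin q | (∑' k : ℕ, (ξ k : ℝ) / (q : ℝ) ^ (k + 1)) < x } =
        ENNReal.ofReal (salemValQ q p i) := by
  intro x hx i hxi
  classical
  have hq0 : (0:ℝ) < q := SalemAux.qpos hq
  have hx' : x = SalemAux.eta q i := hxi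
  -- the approximation sets
  set A : ℕ → Set (ℕ → Fin q) :=
    fun k => {ξ | (∀ r < k, ξ r = i r) ∧ ξ k < i k} with hA
  have hAmeas : ∀ k, MeasurableSet (A k) := by
    intro k
    have : A k = {ξ : ℕ → Fin q | ∀ r < k, ξ r = i r} ∩
        (fun ξ : ℕ → Fin q => ξ k) ⁻¹' {j : Fin q | j < i k} := by
      ext ξ; simp [hA, Set.mem_setOf_eq]
    rw [this]
    exact (salem_cyl_measurable k i).inter
      ((measurable_pi_apply k) ((Set.to_countable _).measurableSet))
  have hAdisj : Pairwise (Function.onFun Disjoint A) := by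
    have key : ∀ k l, k < l → Disjoint (A k) (A l) := by
      intro k l hkl
      rw [Set.disjoint_left]
      rintro ξ ⟨h1, h2⟩ ⟨h3, h4⟩
      rw [h3 k hkl] at h2
      exact lt_irrefl _ h2
    intro k l hne
    rcases hne.lt_or_gt with h | h
    · exact key k l h
    · exact (key l k h).symm
  -- measure of each A k
  have hAval : ∀ k, μ (A k) =
      ENNReal.ofReal (salemBetaQ q p (i k) * ∏ r ∈ Finset.range k, p (i r)) := by
    intro k
    set J : Finset (Fin q) := Finset.univ.filter (fun j => j < i k) with hJ
    have hrepr : A k = ⋃ j ∈ J,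
        {ξ : ℕ → Fin q | ∀ r < k + 1, ξ r = Function.update i k j r} := by
      ext ξ
      simp only [hA, Set.mem_setOf_eq, Set.mem_iUnion, hJ, Finset.mem_filter,
        Finset.mem_univ, true_and]
      constructor
      · rintro ⟨h1, h2⟩
        refine ⟨ξ k, h2, fun r hr => ?_⟩
        rcases Nat.lt_succ_iff_lt_or_eq.mp hr with h | h
        · rw [Function.update_of_ne (by omega) , h1 r h]
        · subst h; rw [Function.update_self]
      · rintro ⟨j, hj, hcyl⟩
        have hk := hcyl k (by omega)
        rw [Function.update_self] at hk
        refine ⟨fun r hr => ?_, by rw [hk]; exact hj⟩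
        have := hcyl r (by omega)
        rwa [Function.update_of_ne (by omega)] at this
    have hcylmeas : ∀ j ∈ J, MeasurableSet
        {ξ : ℕ → Fin q | ∀ r < k + 1, ξ r = Function.update i k j r} := by
      intro j _; exact salem_cyl_measurable _ _
    have hcyldisj : (J : Set (Fin q)).PairwiseDisjoint
        (fun j => {ξ : ℕ → Fin q | ∀ r < k + 1, ξ r = Function.update i k j r}) := by
      intro j _ j' _ hne
      rw [Function.onFun, Set.disjoint_left]
      intro ξ hξ hξ'
      have h1 := hξ k (by omega)
      have h2 := hξ' k (by omega)
      rw [Function.update_self] at h1 h2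
      exact hne (by rw [← h1, ← h2])
    have hterm : ∀ j ∈ J, μ {ξ : ℕ → Fin q | ∀ r < k + 1, ξ r = Function.update i k j r}
        = ENNReal.ofReal ((∏ r ∈ Finset.range k, p (i r)) * p j) := by
      intro j _
      rw [hμ (k+1) (Function.update i k j)]
      congr 1
      rw [Finset.prod_range_succ, Function.update_self]
      congr 1
      refine Finset.prod_congr rfl fun r hr => ?_
      rw [Function.update_of_ne (by have := Finset.mem_range.mp hr; omega)]
    rw [hrepr, measure_biUnion_finset hcyldisj hcylmeas, Finset.sum_congr rfl hterm,
      ← ENNReal.ofReal_sum_of_nonneg (fun j _ => by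
        have h1 : 0 ≤ ∏ r ∈ Finset.range k, p (i r) :=
          Finset.prod_nonneg fun r _ => (hp _).1.le
        exact mul_nonneg h1 (hp j).1.le)]
    congr 1
    rw [salemBetaQ, Finset.sum_mul]
    exact Finset.sum_congr rfl fun j _ => mul_comm _ _
  -- summability of the Salem series
  obtain ⟨M, hM0, hM1, hMbound⟩ := salem_exists_bound hq p hp
  have hbeta_nonneg : ∀ k, 0 ≤ salemBetaQ q p (i k) := by
    intro k
    exact Finset.sum_nonneg fun t _ => (hp t).1.le
  have hbeta_le : ∀ k, salemBetaQ q p (i k) ≤ 1 := by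
    intro k
    rw [← hsum]
    exact Finset.sum_le_sum_of_subset_of_nonneg (Finset.filter_subset _ _)
      (fun t _ _ => (hp t).1.le)
  have hterm_nonneg : ∀ k, 0 ≤ salemBetaQ q p (i k) * ∏ r ∈ Finset.range k, p (i r) :=
    fun k => mul_nonneg (hbeta_nonneg k) (Finset.prod_nonneg fun r _ => (hp _).1.le)
  have hsummable : Summable
      (fun k => salemBetaQ q p (i k) * ∏ r ∈ Finset.range k, p (i r)) := by
    refine Summable.of_nonneg_of_le hterm_nonneg (fun k => ?_)
      (summable_geometric_of_lt_one hM0 hM1)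
    calc salemBetaQ q p (i k) * ∏ r ∈ Finset.range k, p (i r)
        ≤ 1 * ∏ r ∈ Finset.range k, p (i r) := by
          exact mul_le_mul_of_nonneg_right (hbeta_le k)
            (Finset.prod_nonneg fun r _ => (hp _).1.le)
      _ = ∏ r ∈ Finset.range k, p (i r) := one_mul _
      _ ≤ M ^ k := hMbound i k
  -- measure of the union
  have hUnion : μ (⋃ k, A k) = ENNReal.ofReal (salemValQ q p i) := by
    rw [measure_iUnion hAdisj hAmeas]
    rw [salemValQ, ENNReal.ofReal_tsum_of_nonneg hterm_nonneg hsummable]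
    exact tsum_congr hAval
  -- inclusion 1 : {η < x} ⊆ ⋃ A k
  have hsub1 : {ξ : ℕ → Fin q | (∑' k : ℕ, (ξ k : ℝ) / (q : ℝ) ^ (k + 1)) < x}
      ⊆ ⋃ k, A k := by
    intro ξ hξ
    have hlt : SalemAux.eta q ξ < SalemAux.eta q i := by
      rw [← hx']; exact hξ
    obtain ⟨k, h1, h2⟩ := SalemAux.exists_lt_digit hq hlt
    exact Set.mem_iUnion.mpr ⟨k, h1, h2⟩
  -- the exceptional sets
  set S : ℕ → Set (ℕ → Fin q) :=
    fun k => A k ∩ {ξ | SalemAux.eta q ξ = SalemAux.eta q i} with hS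
  have hsub2 : (⋃ k, A k) ⊆
      {ξ : ℕ → Fin q | (∑' k : ℕ, (ξ k : ℝ) / (q : ℝ) ^ (k + 1)) < x} ∪ ⋃ k, S k := by
    intro ξ hξ
    obtain ⟨k, hk1, hk2⟩ := Set.mem_iUnion.mp hξ
    have hle : SalemAux.eta q ξ ≤ SalemAux.eta q i := SalemAux.eta_le hq hk1 hk2
    rcases lt_or_eq_of_le hle with h | h
    · left
      show (∑' k : ℕ, (ξ k : ℝ) / (q : ℝ) ^ (k + 1)) < x
      rw [hx']; exact h
    · right
      exact Set.mem_iUnion.mpr ⟨k, ⟨hk1, hk2⟩, h⟩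
  have hSsub : ∀ k, (S k).Subsingleton := by
    intro k ξ hξ ξ' hξ'
    obtain ⟨⟨hp1, hp2⟩, he⟩ := hξ
    obtain ⟨⟨hp1', hp2'⟩, he'⟩ := hξ'
    obtain ⟨hk1, hk2⟩ := SalemAux.rigidity hq hp1 hp2 he
    obtain ⟨hk1', hk2'⟩ := SalemAux.rigidity hq hp1' hp2' he'
    funext r
    rcases lt_trichotomy r k with h | h | h
    · rw [hp1 r h, hp1' r h]
    · subst h
      exact Fin.ext (by omega)
    · exact Fin.ext (by rw [hk2 r h, hk2' r h])
  have hnull : μ (⋃ k, S k) = 0 := by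
    refine measure_iUnion_null fun k => ?_
    rcases (hSsub k).eq_empty_or_singleton with h | ⟨a, h⟩
    · rw [h]; exact measure_empty
    · rw [h]; exact salem_null_singleton hq p hp μ hμ a
  refine le_antisymm ?_ ?_
  · calc μ {ξ : ℕ → Fin q | (∑' k : ℕ, (ξ k : ℝ) / (q : ℝ) ^ (k + 1)) < x}
        ≤ μ (⋃ k, A k) := measure_mono hsub1
      _ = ENNReal.ofReal (salemValQ q p i) := hUnion
  · calc ENNReal.ofReal (salemValQ q p i) = μ (⋃ k, A k) := hUnion.symm
      _ ≤ μ ({ξ : ℕ → Fin q | (∑' k : ℕ, (ξ k : ℝ) / (q : ℝ) ^ (k + 1)) < x} ∪ ⋃ k, S k) :=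
          measure_mono hsub2
      _ ≤ μ {ξ : ℕ → Fin q | (∑' k : ℕ, (ξ k : ℝ) / (q : ℝ) ^ (k + 1)) < x} + μ (⋃ k, S k) :=
          measure_union_le _ _
      _ = μ {ξ : ℕ → Fin q | (∑' k : ℕ, (ξ k : ℝ) / (q : ℝ) ^ (k + 1)) < x} := by
          rw [hnull, add_zero]
end
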